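/- Let (X,Y) have joint pmf P_{XY} on finite alphabets with full-support marginals, and let (X, Y, U_X, U_Y, Q) be finite-alphabet random variables with joint pmf of the form p(x,y) p(q) p(u_X | x, q) p(u_Y | y, q), where p(x,y) = P_{XY}(x,y). Suppose real numbers R_X, R_Y satisfy R_X ≥ I(X; U_X | U_Y, Q) and R_X + R_Y = I(X,Y; U_X, U_Y | Q). Then R_X + s*(Y;X) · R_Y ≥ I(X; U_X, U_Y | Q). -/

import Mathlib

open scoped BigOperators

noncomputable section

/-- A probability mass function on a finite type, as a real-valued function. -/
def IsPMF {α : Type*} [Fintype α] (p : α → ℝ) : Prop :=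
  (∀ a, 0 ≤ p a) ∧ ∑ a, p a = 1

/-- Kullback–Leibler divergence `D(q ‖ p)` between pmfs on a finite type. -/
def klDiv {α : Type*} [Fintype α] (q p : α → ℝ) : ℝ :=
  ∑ a, q a * Real.logb 2 (q a / p a)

variable {𝓧 𝓨 : Type*} [Fintype 𝓧] [Fintype 𝓨]

/-- x-marginal of a joint pmf. -/
def margX (P : 𝓧 → 𝓨 → ℝ) (x : 𝓧) : ℝ := ∑ y, P x y

/-- y-marginal of a joint pmf. -/
def margY (P : 𝓧 → 𝓨 → ℝ) (y : 𝓨) : ℝ := ∑ x, P x y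

/-- Output distribution of channel `P_{Y|X}` (from joint pmf `P`) driven by input `Q`. -/
def chanOut (P : 𝓧 → 𝓨 → ℝ) (Q : 𝓧 → ℝ) (y : 𝓨) : ℝ :=
  ∑ x, Q x * (P x y / margX P x)

/-- `s*(X;Y)`, for `(X,Y)` with joint pmf `P`. -/
def sStar (P : 𝓧 → 𝓨 → ℝ) : ℝ :=
  sSup { r : ℝ | ∃ Q : 𝓧 → ℝ, IsPMF Q ∧ Q ≠ margX P ∧
    r = klDiv (chanOut P Q) (margY P) / klDiv Q (margX P) }

/-- Mutual information `I(X;Y)` of a joint pmf. -/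
def mutualInfo (P : 𝓧 → 𝓨 → ℝ) : ℝ :=
  ∑ x, ∑ y, P x y * Real.logb 2 (P x y / (margX P x * margY P y))

/-- swapped joint pmf, for `s*(Y;X)` etc. -/
def swap (P : 𝓧 → 𝓨 → ℝ) : 𝓨 → 𝓧 → ℝ := fun y x => P x y

/-- n-fold memoryless extension of a joint source. -/
def iid (P : 𝓧 → 𝓨 → ℝ) (n : ℕ) : (Fin n → 𝓧) → (Fin n → 𝓨) → ℝ :=
  fun xs ys => ∏ i, P (xs i) (ys i)


/-- Conditional mutual information `I(A;B|C)` computed from a joint pmf on `A × B × C`. -/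
def condMI {A B C : Type*} [Fintype A] [Fintype B] [Fintype C]
    (p : A → B → C → ℝ) : ℝ :=
  ∑ a, ∑ b, ∑ c, p a b c *
    Real.logb 2 (p a b c * (∑ a', ∑ b', p a' b' c) /
      ((∑ b', p a b' c) * (∑ a', p a' b c)))

variable {𝓤x 𝓤y 𝓠 : Type*} [Fintype 𝓤x] [Fintype 𝓤y] [Fintype 𝓠]

/-- Joint pmf of `(X,Y,U_X,U_Y,Q)` of the Berger–Tung form
`p(x,y) p(q) p(u_X|x,q) p(u_Y|y,q)`. -/
def btJoint (P : 𝓧 → 𝓨 → ℝ) (pq : 𝓠 → ℝ)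
    (wx : 𝓧 → 𝓠 → 𝓤x → ℝ) (wy : 𝓨 → 𝓠 → 𝓤y → ℝ) :
    𝓧 → 𝓨 → 𝓤x → 𝓤y → 𝓠 → ℝ :=
  fun x y ux uy q => P x y * pq q * wx x q ux * wy y q uy

/-!
By the chain rule, `I(X;U_X U_Y|Q) = I(X;U_Y|Q) + I(X;U_X|U_Y,Q)` and
`R_X + R_Y = I(XY;U_Y|Q) + I(XY;U_X|U_Y,Q)`. Given `Q = q` and `U_Y = u`, the law of `X` is the
image of the law of `Y` under the channel `P_{X|Y}`, while the reference laws `P_X`, `P_Y` do not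
depend on `q`; so the strong data processing inequality, applied term by term to
`I(X;U_Y|Q) = ∑ p(u,q) D(P_{X|u,q} ‖ P_X)`, gives
`I(X;U_Y|Q) ≤ s* I(Y;U_Y|Q) ≤ s* I(XY;U_Y|Q)`. Together with
`I(X;U_X|U_Y,Q) ≤ I(XY;U_X|U_Y,Q)`, `R_X ≥ I(X;U_X|U_Y,Q)` and `0 ≤ s* ≤ 1` (ordinary data
processing), the convex combination `R_X + s* R_Y = (1 - s*) R_X + s* (R_X + R_Y)` dominates
`I(X;U_Y|Q) + I(X;U_X|U_Y,Q)`.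
-/

open Finset Real

section Logarithm

variable {ι : Type*} [Fintype ι]

lemma sub_le_mul_log_div {a c : ℝ} (ha : 0 ≤ a) (hc : 0 ≤ c) (hac : 0 < a → 0 < c) :
    a - c ≤ a * log (a / c) := by
  rcases ha.eq_or_lt with rfl | ha
  · simpa using hc
  have := mul_le_mul_of_nonneg_left (one_sub_inv_le_log_of_pos (div_pos ha (hac ha))) ha.le
  rwa [inv_div, mul_sub, mul_one, mul_div_cancel₀ _ ha.ne'] at this

/-- The log-sum inequality. -/
lemma sum_mul_log_div_le {a b : ι → ℝ} (ha : ∀ i, 0 ≤ a i) (hb : ∀ i, 0 ≤ b i)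
    (hab : ∀ i, 0 < a i → 0 < b i) :
    (∑ i, a i) * log ((∑ i, a i) / ∑ i, b i) ≤ ∑ i, a i * log (a i / b i) := by
  by_cases h0 : ∀ i, a i = 0
  · simp [h0]
  obtain ⟨i₀, hi₀⟩ : ∃ i, 0 < a i := by
    by_contra! h
    exact h0 fun i => le_antisymm (h i) (ha i)
  set A := ∑ i, a i
  set B := ∑ i, b i
  have hA : 0 < A := sum_pos' (fun i _ => ha i) ⟨i₀, mem_univ _, hi₀⟩
  have hB : 0 < B := sum_pos' (fun i _ => hb i) ⟨i₀, mem_univ _, hab i₀ hi₀⟩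
  -- tangent line of `x ↦ x log x` at the ratio `A / B`
  have key : ∀ i, a i * log (A / B) + (a i - b i * (A / B)) ≤ a i * log (a i / b i) := by
    intro i
    rcases (ha i).eq_or_lt with hi | hi
    · rw [← hi]; simpa using mul_nonneg (hb i) (div_nonneg hA.le hB.le)
    have hbi := hab i hi
    have hAB := div_pos hA hB
    have := sub_le_mul_log_div (ha i) (mul_pos hbi hAB).le fun _ => mul_pos hbi hAB
    rw [← div_div, log_div (div_pos hi hbi).ne' hAB.ne'] at this
    linarith
  calc A * log (A / B) = ∑ i, (a i * log (A / B) + (a i - b i * (A / B))) := by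
        rw [sum_add_distrib, sum_sub_distrib, ← sum_mul, ← sum_mul, mul_div_cancel₀ _ hB.ne']
        ring
    _ ≤ ∑ i, a i * log (a i / b i) := sum_le_sum fun i _ => key i

lemma logb_div_eq_add_logb_div {b u q n m ma mb : ℝ} (hu : u ≠ 0) (hq : q ≠ 0) (hn : n ≠ 0)
    (hm : m ≠ 0) (hma : ma ≠ 0) (hmb : mb ≠ 0) :
    logb b (u * m / (ma * mb)) = logb b (q * m / (ma * n)) + logb b (u * n / (q * mb)) := by
  rw [← logb_mul (by positivity) (by positivity)]
  congr 1
  field_simp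

end Logarithm

section KL

variable {α : Type*} [Fintype α]

lemma klDiv_eq_sum_mul_log_div (q p : α → ℝ) :
    klDiv q p = (∑ a, q a * log (q a / p a)) / log 2 := by
  simp only [klDiv, logb, sum_div, mul_div_assoc]

@[simp]
lemma klDiv_self (p : α → ℝ) : klDiv p p = 0 := by
  refine sum_eq_zero fun a _ => ?_
  rcases eq_or_ne (p a) 0 with h | h <;> simp [h]

lemma klDiv_nonneg {q p : α → ℝ} (hq : ∀ a, 0 ≤ q a) (hp : ∀ a, 0 ≤ p a)
    (hqp : ∀ a, 0 < q a → 0 < p a) (hsum : ∑ a, q a = ∑ a, p a) : 0 ≤ klDiv q p := by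
  rw [klDiv_eq_sum_mul_log_div]
  refine div_nonneg ?_ (log_nonneg one_le_two)
  refine le_trans (le_of_eq ?_) (sum_mul_log_div_le hq hp hqp)
  rcases eq_or_ne (∑ a, p a) 0 with h | h <;> simp [hsum, h]

end KL

section CondMI

variable {A B C : Type*} [Fintype A] [Fintype B] [Fintype C]

lemma condMI_eq_sum_mul_klDiv {p : A → B → C → ℝ} (hp : ∀ a b c, 0 ≤ p a b c) :
    condMI p = ∑ b, ∑ c, (∑ a, p a b c) *
      klDiv (fun a => p a b c / ∑ a', p a' b c)
        (fun a => (∑ b', p a b' c) / ∑ a', ∑ b', p a' b' c) := by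
  simp only [condMI, klDiv]
  rw [sum_comm]
  refine sum_congr rfl fun b _ => ?_
  rw [sum_comm]
  refine sum_congr rfl fun c _ => ?_
  rw [mul_sum]
  refine sum_congr rfl fun a _ => ?_
  rcases (hp a b c).eq_or_lt with h | h
  · simp [← h]
  have hMb : 0 < ∑ a', p a' b c :=
    h.trans_le (single_le_sum (fun a' _ => hp a' b c) (mem_univ a))
  rw [← mul_assoc, mul_div_cancel₀ _ hMb.ne', div_div_div_eq, mul_comm (∑ a', p a' b c)]

lemma condMI_nonneg {p : A → B → C → ℝ} (hp : ∀ a b c, 0 ≤ p a b c) : 0 ≤ condMI p := by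
  rw [condMI_eq_sum_mul_klDiv hp]
  refine sum_nonneg fun b _ => sum_nonneg fun c _ => ?_
  have hMb : 0 ≤ ∑ a, p a b c := sum_nonneg fun a _ => hp a b c
  rcases hMb.eq_or_lt with h | hMb
  · simp [← h]
  have hMab : ∀ a, p a b c ≤ ∑ b', p a b' c :=
    fun a => single_le_sum (fun b' _ => hp a b' c) (mem_univ b)
  have hM : 0 < ∑ a', ∑ b', p a' b' c := hMb.trans_le (sum_le_sum fun a _ => hMab a)
  refine mul_nonneg hMb.le (klDiv_nonneg (fun a => div_nonneg (hp a b c) hMb.le)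
    (fun a => div_nonneg (sum_nonneg fun b' _ => hp a b' c) hM.le) (fun a ha => ?_) ?_)
  · exact div_pos (((div_pos_iff_of_pos_right hMb).1 ha).trans_le (hMab a)) hM
  · rw [← sum_div, ← sum_div, div_self hMb.ne', div_self hM.ne']

lemma condMI_comm (p : A → B → C → ℝ) : condMI (fun b a c => p a b c) = condMI p := by
  unfold condMI
  rw [sum_comm]
  refine sum_congr rfl fun a _ => sum_congr rfl fun b _ => sum_congr rfl fun c _ => ?_
  rw [sum_comm, mul_comm (∑ a', p a' b c)]

lemma condMI_comp_equiv {B' : Type*} [Fintype B'] (p : A → B → C → ℝ) (e : B' ≃ B) :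
    condMI (fun a b c => p a (e b) c) = condMI p := by
  have hinner : ∀ a c, ∑ b, p a (e b) c = ∑ b, p a b c := fun a c => e.sum_comp (p a · c)
  simp only [condMI, hinner]
  exact sum_congr rfl fun a _ => Fintype.sum_equiv e _ _ fun _ => rfl


/-- The chain rule `I(A;B₁B₂|C) = I(A;B₂|C) + I(A;B₁|B₂C)`; the last term conditions on the
pair `(B₂, C)`. -/
lemma condMI_chain {B₁ B₂ : Type*} [Fintype B₁] [Fintype B₂] {p : A → B₁ × B₂ → C → ℝ}
    (hp : ∀ a b c, 0 ≤ p a b c) :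
    condMI p = condMI (fun a b₂ c => ∑ b₁, p a (b₁, b₂) c)
      + condMI (fun a b₁ (bc : B₂ × C) => p a (b₁, bc.1) bc.2) := by
  have hswap : ∀ a c, ∑ b₂, ∑ b₁, p a (b₁, b₂) c = ∑ b₁, ∑ b₂, p a (b₁, b₂) c :=
    fun a c => sum_comm
  simp only [condMI, Fintype.sum_prod_type, hswap]
  rw [← sum_add_distrib]
  refine sum_congr rfl fun a _ => ?_
  have hreorder : ∀ (f : B₁ → B₂ → C → ℝ) (g : B₂ → C → ℝ),
      ∑ b₂, ∑ c : C, (∑ b₁, f b₁ b₂ c) * g b₂ c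
        = ∑ b₁, ∑ b₂, ∑ c : C, f b₁ b₂ c * g b₂ c := by
    intro f g
    simp only [sum_mul]
    exact (sum_congr rfl fun b₂ _ => sum_comm).trans sum_comm
  rw [hreorder, ← sum_add_distrib]
  refine sum_congr rfl fun b₁ _ => ?_
  rw [← sum_add_distrib]
  refine sum_congr rfl fun b₂ _ => ?_
  rw [← sum_add_distrib]
  refine sum_congr rfl fun c _ => ?_
  rcases (hp a (b₁, b₂) c).eq_or_lt with h | hu
  · simp [← h]
  have hp' : ∀ a b₁ b₂, 0 ≤ p a (b₁, b₂) c := fun a b₁ b₂ => hp a (b₁, b₂) c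
  have hQ : p a (b₁, b₂) c ≤ ∑ b₁', p a (b₁', b₂) c :=
    single_le_sum (fun b _ => hp' a b b₂) (mem_univ b₁)
  have hMb : p a (b₁, b₂) c ≤ ∑ a', p a' (b₁, b₂) c :=
    single_le_sum (fun a' _ => hp' a' b₁ b₂) (mem_univ a)
  have hN : ∑ b₁', p a (b₁', b₂) c ≤ ∑ a', ∑ b₁', p a' (b₁', b₂) c :=
    single_le_sum (f := fun a' => ∑ b₁', p a' (b₁', b₂) c)
      (fun a' _ => sum_nonneg fun _ _ => hp' _ _ _) (mem_univ a)
  have hMa : ∑ b₁', p a (b₁', b₂) c ≤ ∑ b₁', ∑ b₂', p a (b₁', b₂') c :=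
    sum_le_sum fun b₁' _ => single_le_sum (fun b₂' _ => hp' a b₁' b₂') (mem_univ b₂)
  have hM : ∑ a', ∑ b₁', p a' (b₁', b₂) c ≤ ∑ a', ∑ b₁', ∑ b₂', p a' (b₁', b₂') c :=
    sum_le_sum fun a' _ => sum_le_sum fun b₁' _ =>
      single_le_sum (fun b₂' _ => hp' a' b₁' b₂') (mem_univ b₂)
  have hQ0 := hu.trans_le hQ
  have hN0 := hQ0.trans_le hN
  rw [← mul_add, logb_div_eq_add_logb_div hu.ne' hQ0.ne' hN0.ne' (hN0.trans_le hM).ne'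
    (hQ0.trans_le hMa).ne' (hu.trans_le hMb).ne']

lemma condMI_sum_fst_le {A₁ A₂ : Type*} [Fintype A₁] [Fintype A₂]
    {p : A₁ × A₂ → B → C → ℝ} (hp : ∀ a b c, 0 ≤ p a b c) :
    condMI (fun a₂ b c => ∑ a₁, p (a₁, a₂) b c) ≤ condMI p :=
  calc condMI (fun a₂ b c => ∑ a₁, p (a₁, a₂) b c)
      = condMI (fun b a₂ c => ∑ a₁, p (a₁, a₂) b c) := (condMI_comm _).symm
    _ ≤ condMI (fun b a₂ c => ∑ a₁, p (a₁, a₂) b c)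
          + condMI (fun b a₁ (ac : A₂ × C) => p (a₁, ac.1) b ac.2) :=
        le_add_of_nonneg_right (condMI_nonneg fun _ _ _ => hp _ _ _)
    _ = condMI p :=
        (condMI_chain (p := fun b a c => p a b c) fun _ _ _ => hp _ _ _).symm.trans
          (condMI_comm p)

lemma condMI_sum_snd_le {A₁ A₂ : Type*} [Fintype A₁] [Fintype A₂]
    {p : A₁ × A₂ → B → C → ℝ} (hp : ∀ a b c, 0 ≤ p a b c) :
    condMI (fun a₁ b c => ∑ a₂, p (a₁, a₂) b c) ≤ condMI p :=
  calc condMI (fun a₁ b c => ∑ a₂, p (a₁, a₂) b c)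
      ≤ condMI (fun (a : A₂ × A₁) b c => p a.swap b c) :=
        condMI_sum_fst_le (p := fun a b c => p a.swap b c) fun _ _ _ => hp _ _ _
    _ = condMI (fun b (a : A₂ × A₁) c => p a.swap b c) := (condMI_comm _).symm
    _ = condMI (fun b a c => p a b c) :=
        condMI_comp_equiv (fun b a c => p a b c) (Equiv.prodComm A₂ A₁)
    _ = condMI p := condMI_comm p

end CondMI

section Channel

variable {P : 𝓧 → 𝓨 → ℝ}

lemma IsPMF.sum_margX (hP : IsPMF (fun p : 𝓧 × 𝓨 => P p.1 p.2)) : ∑ x, margX P x = 1 := by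
  rw [← hP.2, Fintype.sum_prod_type]; rfl

lemma IsPMF.sum_margY (hP : IsPMF (fun p : 𝓧 × 𝓨 => P p.1 p.2)) : ∑ y, margY P y = 1 := by
  rw [← hP.2, Fintype.sum_prod_type, sum_comm]; rfl

lemma IsPMF.swap (hP : IsPMF (fun p : 𝓧 × 𝓨 => P p.1 p.2)) :
    IsPMF (fun p : 𝓨 × 𝓧 => swap P p.1 p.2) :=
  ⟨fun p => hP.1 p.swap, by rw [Fintype.sum_prod_type]; exact hP.sum_margY⟩

lemma chanOut_nonneg (hP : ∀ x y, 0 ≤ P x y) {Q : 𝓧 → ℝ} (hQ : ∀ x, 0 ≤ Q x) (y : 𝓨) :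
    0 ≤ chanOut P Q y :=
  sum_nonneg fun x _ => mul_nonneg (hQ x) (div_nonneg (hP x y) (sum_nonneg fun y _ => hP x y))

lemma sum_chanOut (hX : ∀ x, margX P x ≠ 0) (Q : 𝓧 → ℝ) : ∑ y, chanOut P Q y = ∑ x, Q x := by
  unfold chanOut
  rw [sum_comm]
  refine sum_congr rfl fun x _ => ?_
  rw [← mul_sum, ← sum_div]
  exact mul_right_eq_self₀.2 (Or.inl (div_self (hX x)))

lemma klDiv_chanOut_le (hP : ∀ x y, 0 ≤ P x y) (hX : ∀ x, 0 < margX P x) {Q : 𝓧 → ℝ}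
    (hQ : ∀ x, 0 ≤ Q x) : klDiv (chanOut P Q) (margY P) ≤ klDiv Q (margX P) := by
  rw [klDiv_eq_sum_mul_log_div, klDiv_eq_sum_mul_log_div]
  refine div_le_div_of_nonneg_right ?_ (log_nonneg one_le_two)
  set W : 𝓧 → 𝓨 → ℝ := fun x y => P x y / margX P x
  have hW : ∀ x y, 0 ≤ W x y := fun x y => div_nonneg (hP x y) (hX x).le
  have hmargY : ∀ y, margY P y = ∑ x, margX P x * W x y :=
    fun y => sum_congr rfl fun x _ => (mul_div_cancel₀ _ (hX x).ne').symm
  have hrow : ∀ x, ∑ y, W x y = 1 := fun x => by rw [← sum_div]; exact div_self (hX x).ne'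
  have hlogsum : ∀ y, chanOut P Q y * log (chanOut P Q y / margY P y)
      ≤ ∑ x, W x y * (Q x * log (Q x / margX P x)) := by
    intro y
    rw [hmargY]
    refine (sum_mul_log_div_le (fun x => mul_nonneg (hQ x) (hW x y))
      (fun x => mul_nonneg (hX x).le (hW x y)) fun x h => ?_).trans_eq ?_
    · exact mul_pos (hX x) (pos_of_mul_pos_right h (hQ x))
    refine sum_congr rfl fun x _ => ?_
    rcases (hW x y).eq_or_lt with h | h
    · simp [← h]
    rw [mul_div_mul_right _ _ h.ne']; ring
  calc ∑ y, chanOut P Q y * log (chanOut P Q y / margY P y)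
      ≤ ∑ y, ∑ x, W x y * (Q x * log (Q x / margX P x)) := sum_le_sum fun y _ => hlogsum y
    _ = ∑ x, Q x * log (Q x / margX P x) := by
        rw [sum_comm]
        simp only [← sum_mul, hrow, one_mul]

end Channel

section SStar

variable {P : 𝓧 → 𝓨 → ℝ}

lemma klDiv_margX_nonneg (hP : IsPMF (fun p : 𝓧 × 𝓨 => P p.1 p.2)) (hX : ∀ x, 0 < margX P x)
    {Q : 𝓧 → ℝ} (hQ : IsPMF Q) : 0 ≤ klDiv Q (margX P) :=
  klDiv_nonneg hQ.1 (fun x => (hX x).le) (fun x _ => hX x) (hQ.2.trans hP.sum_margX.symm)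

lemma klDiv_chanOut_div_klDiv_mem_Icc (hP : IsPMF (fun p : 𝓧 × 𝓨 => P p.1 p.2))
    (hX : ∀ x, 0 < margX P x) (hY : ∀ y, 0 < margY P y) {Q : 𝓧 → ℝ} (hQ : IsPMF Q) :
    klDiv (chanOut P Q) (margY P) / klDiv Q (margX P) ∈ Set.Icc 0 1 := by
  have hP' : ∀ x y, 0 ≤ P x y := fun x y => hP.1 (x, y)
  have hDX := klDiv_margX_nonneg hP hX hQ
  have hDY : 0 ≤ klDiv (chanOut P Q) (margY P) :=
    klDiv_nonneg (chanOut_nonneg hP' hQ.1) (fun y => (hY y).le) (fun y _ => hY y)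
      (by rw [sum_chanOut (fun x => (hX x).ne'), hQ.2, hP.sum_margY])
  exact ⟨div_nonneg hDY hDX, div_le_one_of_le₀ (klDiv_chanOut_le hP' hX hQ.1) hDX⟩

lemma sStar_nonneg (hP : IsPMF (fun p : 𝓧 × 𝓨 => P p.1 p.2))
    (hX : ∀ x, 0 < margX P x) (hY : ∀ y, 0 < margY P y) : 0 ≤ sStar P :=
  Real.sSup_nonneg <| by
    rintro _ ⟨Q, hQ, -, rfl⟩
    exact (klDiv_chanOut_div_klDiv_mem_Icc hP hX hY hQ).1

lemma sStar_le_one (hP : IsPMF (fun p : 𝓧 × 𝓨 => P p.1 p.2))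
    (hX : ∀ x, 0 < margX P x) (hY : ∀ y, 0 < margY P y) : sStar P ≤ 1 :=
  Real.sSup_le (by
    rintro _ ⟨Q, hQ, -, rfl⟩
    exact (klDiv_chanOut_div_klDiv_mem_Icc hP hX hY hQ).2) zero_le_one

lemma klDiv_chanOut_le_sStar_mul (hP : IsPMF (fun p : 𝓧 × 𝓨 => P p.1 p.2))
    (hX : ∀ x, 0 < margX P x) (hY : ∀ y, 0 < margY P y) {Q : 𝓧 → ℝ} (hQ : IsPMF Q) :
    klDiv (chanOut P Q) (margY P) ≤ sStar P * klDiv Q (margX P) := by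
  have hDX := klDiv_margX_nonneg hP hX hQ
  rcases hDX.eq_or_lt with h0 | hpos
  · rw [← h0, mul_zero, h0]
    exact klDiv_chanOut_le (fun x y => hP.1 (x, y)) hX hQ.1
  have hne : Q ≠ margX P := by
    rintro rfl
    simp at hpos
  have hbdd : BddAbove {r | ∃ Q : 𝓧 → ℝ, IsPMF Q ∧ Q ≠ margX P ∧
      r = klDiv (chanOut P Q) (margY P) / klDiv Q (margX P)} :=
    ⟨1, by rintro _ ⟨Q, hQ, -, rfl⟩; exact (klDiv_chanOut_div_klDiv_mem_Icc hP hX hY hQ).2⟩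
  rw [← div_le_iff₀ hpos]
  exact le_csSup hbdd ⟨Q, hQ, hne, rfl⟩

end SStar

section ConditionalSDPI

variable {P : 𝓧 → 𝓨 → ℝ} {U W : Type*} [Fintype U] [Fintype W]

lemma condMI_chanOut_le_sStar_mul (hP : IsPMF (fun p : 𝓧 × 𝓨 => P p.1 p.2))
    (hX : ∀ x, 0 < margX P x) (hY : ∀ y, 0 < margY P y) {r : 𝓧 → U → W → ℝ}
    (hr : ∀ x u w, 0 ≤ r x u w)
    (hindep : ∀ x w, ∑ u, r x u w = (∑ x', ∑ u, r x' u w) * margX P x) :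
    condMI (fun y u w => chanOut P (r · u w) y) ≤ sStar P * condMI r := by
  have hX' : ∀ x, margX P x ≠ 0 := fun x => (hX x).ne'
  have hf : ∀ y u w, 0 ≤ chanOut P (r · u w) y :=
    fun y u w => chanOut_nonneg (fun x y => hP.1 (x, y)) (hr · u w) y
  have hfY : ∀ y w, ∑ u, chanOut P (r · u w) y = (∑ x, ∑ u, r x u w) * margY P y := by
    intro y w
    simp only [chanOut, margY]
    rw [sum_comm, mul_sum]
    refine sum_congr rfl fun x _ => ?_
    rw [← sum_mul, hindep, mul_assoc, mul_div_cancel₀ _ (hX' x)]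
  rw [condMI_eq_sum_mul_klDiv hf, condMI_eq_sum_mul_klDiv hr, mul_sum]
  refine sum_le_sum fun u _ => ?_
  rw [mul_sum]
  refine sum_le_sum fun w _ => ?_
  simp only [sum_chanOut hX']
  rcases (sum_nonneg fun x _ => hr x u w : 0 ≤ ∑ x, r x u w).eq_or_lt with hm | hm
  · rw [← hm, zero_mul, zero_mul, mul_zero]
  have hN : 0 < ∑ x, ∑ u, r x u w :=
    hm.trans_le (sum_le_sum fun x _ => single_le_sum (fun u _ => hr x u w) (mem_univ u))
  have hrefY : (fun y => (∑ u, chanOut P (r · u w) y) / ∑ y', ∑ u, chanOut P (r · u w) y')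
      = margY P := by
    simp only [hfY, ← mul_sum, hP.sum_margY, mul_one]
    exact funext fun y => mul_div_cancel_left₀ _ hN.ne'
  have hrefX : (fun x => (∑ u, r x u w) / ∑ x', ∑ u, r x' u w) = margX P := by
    funext x
    rw [hindep x w, mul_div_cancel_left₀ _ hN.ne']
  have hcond : (fun y => chanOut P (r · u w) y / ∑ x, r x u w)
      = chanOut P (fun x => r x u w / ∑ x', r x' u w) := by
    funext y
    simp only [chanOut, sum_div]
    exact sum_congr rfl fun x _ => by ring
  have hQ : IsPMF fun x => r x u w / ∑ x', r x' u w :=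
    ⟨fun x => div_nonneg (hr x u w) hm.le, by rw [← sum_div, div_self hm.ne']⟩
  rw [hrefY, hrefX, hcond, mul_left_comm]
  exact mul_le_mul_of_nonneg_left (klDiv_chanOut_le_sStar_mul hP hX hY hQ) hm.le

end ConditionalSDPI

section BergerTung

variable {P : 𝓧 → 𝓨 → ℝ} {pq : 𝓠 → ℝ} {wx : 𝓧 → 𝓠 → 𝓤x → ℝ} {wy : 𝓨 → 𝓠 → 𝓤y → ℝ}

/-- `X ↔ Y ↔ (U_Y, Q)` is a Markov chain through the channel `P_{X|Y}`, and `Y` is independent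
of `Q`. -/
lemma condMI_btJoint_le_sStar_mul (hP : IsPMF (fun p : 𝓧 × 𝓨 => P p.1 p.2))
    (hX : ∀ x, 0 < margX P x) (hY : ∀ y, 0 < margY P y) (hq : ∀ q, 0 ≤ pq q)
    (hwx : ∀ x q, IsPMF (wx x q)) (hwy : ∀ y q, IsPMF (wy y q)) :
    condMI (fun x uy q => ∑ ux, ∑ y, btJoint P pq wx wy x y ux uy q)
      ≤ sStar (swap P) * condMI (fun y uy q => ∑ x, ∑ ux, btJoint P pq wx wy x y ux uy q) := by
  have hUX : ∀ x y uy q,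
      ∑ ux, btJoint P pq wx wy x y ux uy q = P x y * pq q * wy y q uy := by
    intro x y uy q
    simp only [btJoint, ← sum_mul, ← mul_sum, (hwx x q).2, mul_one]
  have hYUQ : ∀ y uy q, ∑ x, ∑ ux, btJoint P pq wx wy x y ux uy q
      = pq q * margY P y * wy y q uy := by
    intro y uy q
    simp only [hUX, margY, ← sum_mul]
    ring
  have hXUQ : ∀ x uy q, ∑ ux, ∑ y, btJoint P pq wx wy x y ux uy q
      = chanOut (swap P) (fun y => pq q * margY P y * wy y q uy) x := by
    intro x uy q
    rw [sum_comm]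
    refine sum_congr rfl fun y _ => ?_
    change _ = _ * (P x y / margY P y)
    rw [hUX]
    field_simp [(hY y).ne']
  simp only [hYUQ, hXUQ]
  refine condMI_chanOut_le_sStar_mul hP.swap hY hX
    (fun y uy q => mul_nonneg (mul_nonneg (hq q) (hY y).le) ((hwy y q).1 uy)) fun y q => ?_
  simp only [← mul_sum, (hwy _ q).2, mul_one, hP.sum_margY]
  rfl

end BergerTung

/-- For a Berger–Tung-form joint pmf
`p(x,y) p(q) p(u_X|x,q) p(u_Y|y,q)`, if `R_X ≥ I(X;U_X|U_Y,Q)` and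
`R_X + R_Y = I(X,Y;U_X,U_Y|Q)`, then `R_X + s*(Y;X)·R_Y ≥ I(X;U_X,U_Y|Q)`. -/
theorem rate_lower_bound_from_BT (P : 𝓧 → 𝓨 → ℝ)
    (hP : IsPMF (fun p : 𝓧 × 𝓨 => P p.1 p.2))
    (hX : ∀ x, 0 < margX P x) (hY : ∀ y, 0 < margY P y)
    (pq : 𝓠 → ℝ) (hq : IsPMF pq)
    (wx : 𝓧 → 𝓠 → 𝓤x → ℝ) (hwx : ∀ x q, IsPMF (wx x q))
    (wy : 𝓨 → 𝓠 → 𝓤y → ℝ) (hwy : ∀ y q, IsPMF (wy y q))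
    (Rx Ry : ℝ)
    (hRx : Rx ≥ condMI (fun (x : 𝓧) (ux : 𝓤x) (c : 𝓤y × 𝓠) =>
      ∑ y, btJoint P pq wx wy x y ux c.1 c.2))
    (hsum : Rx + Ry = condMI (fun (p : 𝓧 × 𝓨) (u : 𝓤x × 𝓤y) (q : 𝓠) =>
      btJoint P pq wx wy p.1 p.2 u.1 u.2 q)) :
    Rx + sStar (swap P) * Ry ≥
      condMI (fun (x : 𝓧) (u : 𝓤x × 𝓤y) (q : 𝓠) =>
        ∑ y, btJoint P pq wx wy x y u.1 u.2 q) := by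
  have hj : ∀ x y ux uy q, 0 ≤ btJoint P pq wx wy x y ux uy q := fun x y ux uy q =>
    mul_nonneg (mul_nonneg (mul_nonneg (hP.1 (x, y)) (hq.1 q)) ((hwx x q).1 ux)) ((hwy y q).1 uy)
  have hs0 := sStar_nonneg hP.swap hY hX
  have hs1 := sStar_le_one hP.swap hY hX
  have hchainX := condMI_chain
    (p := fun x (u : 𝓤x × 𝓤y) q => ∑ y, btJoint P pq wx wy x y u.1 u.2 q)
    fun x u q => sum_nonneg fun y _ => hj x y u.1 u.2 q
  have hchainXY := condMI_chain
    (p := fun (xy : 𝓧 × 𝓨) u q => btJoint P pq wx wy xy.1 xy.2 u.1 u.2 q)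
    fun xy u q => hj xy.1 xy.2 u.1 u.2 q
  have hY_le := condMI_sum_fst_le
    (p := fun (xy : 𝓧 × 𝓨) uy q => ∑ ux, btJoint P pq wx wy xy.1 xy.2 ux uy q)
    fun xy uy q => sum_nonneg fun ux _ => hj xy.1 xy.2 ux uy q
  have hX_le := condMI_sum_snd_le
    (p := fun (xy : 𝓧 × 𝓨) ux (c : 𝓤y × 𝓠) => btJoint P pq wx wy xy.1 xy.2 ux c.1 c.2)
    fun xy ux c => hj xy.1 xy.2 ux c.1 c.2
  have hsdpi := condMI_btJoint_le_sStar_mul hP hX hY hq.1 hwx hwy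
  dsimp only at hchainX hchainXY hY_le hX_le
  rw [ge_iff_le, hchainX]
  rw [hchainXY] at hsum
  nlinarith [mul_le_mul_of_nonneg_left hY_le hs0, mul_le_mul_of_nonneg_left hX_le hs0,
    mul_le_mul_of_nonneg_left hRx (sub_nonneg.2 hs1)]

end
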